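/- The binary word p = 101 has an internal zero at n = 6 and does not have an internal zero at any other n ≥ 0; equivalently, for every n ≠ 6 and every k with 0 ≤ k ≤ M_{n,101}, there is a binary word of length n with exactly k occurrences of 101, while B_{6,101}(5) = 0 and B_{6,101}(6) ≠ 0. -/

import Mathlib

/-- `occ p w` is the number of occurrences of `p` as a subsequence of `w`,
i.e. the number of choices of indices `i₁ < ⋯ < i_l` in `w` matching `p`. -/
def occ (p w : List Bool) : ℕ := w.sublists.count p

/-- `B n p k` is the number of binary words of length `n` with exactly `k` occurrences of `p`. -/
noncomputable def B (n : ℕ) (p : List Bool) (k : ℕ) : ℕ :=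
  Nat.card {w : List Bool // w.length = n ∧ occ p w = k}

/-- The list of runs (maximal blocks of consecutive equal letters) of a binary word. -/
def runs (p : List Bool) : List (List Bool) := p.splitBy (· == ·)

/-- The number of runs of a binary word. -/
def numRuns (p : List Bool) : ℕ := (runs p).length

/-- The number of runs of size `i` of a binary word. -/
def numRunsOfSize (p : List Bool) (i : ℕ) : ℕ := ((runs p).map List.length).count i

/-- `maxOcc n p` is the maximum number of occurrences of `p` among binary words of length `n`. -/
noncomputable def maxOcc (n : ℕ) (p : List Bool) : ℕ :=
  sSup {k | ∃ w : List Bool, w.length = n ∧ occ p w = k}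

/-- `p` has an internal zero at `n` if the sequence `(B n p k)_{k ≥ 0}` has an internal zero. -/
def HasInternalZeroAt (p : List Bool) (n : ℕ) : Prop :=
  ∃ k₁ k₂ k₃ : ℕ, k₁ < k₂ ∧ k₂ < k₃ ∧ B n p k₁ ≠ 0 ∧ B n p k₂ = 0 ∧ B n p k₃ ≠ 0

/-!
Let `t` be the number of ones of a word. An occurrence of `101` is determined by its middle zero
and a choice of one of the ones before and one of the ones after it, so a zero preceded by `a`
ones lies in `a * (t - a)` occurrences, and inserting it adds exactly that much. Hence a word with
`z` zeros has at most `z * ⌊t/2⌋ * ⌈t/2⌉` occurrences, a product of three numbers with sum `n`;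
the largest such product is `(n - 2s) * s^2` with `s = ⌊(n+1)/3⌋`, attained by `1^s 0^(n-2s) 1^s`.

Conversely, zeros may be placed at any levels, and a zero at level `s - e` in a word with `2s`
ones contributes `s^2 - e^2`. So every value in the top range `(z - 1) * s^2 ≤ k ≤ z * s^2` is
reached by writing `z * s^2 - k` as a sum of four squares (Lagrange), once `z ≥ 4`, which holds
for `n ≥ 12`; smaller values are inherited from length `n - 1` by prepending a zero. The lengths
below `12` are checked exhaustively, and only `n = 6` fails there: `5` is not attained.
-/

theorem occ_eq_count_sublists' (p w : List Bool) : occ p w = w.sublists'.count p :=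
  (List.sublists_perm_sublists' w).count_eq p

theorem occ_nil_left (w : List Bool) : occ [] w = 1 := by
  induction w with
  | nil => rfl
  | cons a w ih =>
    rw [occ_eq_count_sublists'] at ih ⊢
    simp [List.sublists'_cons, List.count_append, ih, List.count_eq_zero]

theorem occ_cons_cons (a b : Bool) (p w : List Bool) :
    occ (b :: p) (a :: w) = occ (b :: p) w + if a = b then occ p w else 0 := by
  simp only [occ_eq_count_sublists', List.sublists'_cons, List.count_append]
  congr 1
  split_ifs with h
  · subst h; exact List.count_map_of_injective _ _ List.cons_injective _
  · exact List.count_eq_zero.2 (by simp [h])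

theorem occ_singleton (b : Bool) (w : List Bool) : occ [b] w = w.count b := by
  induction w with
  | nil => rfl
  | cons a w ih => simp [occ_cons_cons, ih, occ_nil_left, List.count_cons, beq_iff_eq]

theorem occ_eq_zero_of_not_sublist {p w : List Bool} (h : ¬p.Sublist w) : occ p w = 0 :=
  List.count_eq_zero.2 (by simpa [List.mem_sublists] using h)

theorem occ_01_append_false_cons (u v : List Bool) :
    occ [false, true] (u ++ false :: v) = occ [false, true] (u ++ v) + v.count true := by
  induction u with
  | nil => simp [occ_cons_cons, occ_singleton]
  | cons a u ih =>
    rw [List.cons_append, List.cons_append, occ_cons_cons, occ_cons_cons, ih]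
    cases a <;> simp only [occ_singleton, List.count_append, List.count_cons_of_ne, ne_eq,
      Bool.false_eq_true, not_false_eq_true, reduceIte] <;> omega

theorem occ_101_append_false_cons (u v : List Bool) :
    occ [true, false, true] (u ++ false :: v) =
      occ [true, false, true] (u ++ v) + u.count true * v.count true := by
  induction u with
  | nil => simp [occ_cons_cons]
  | cons a u ih =>
    rw [List.cons_append, List.cons_append, occ_cons_cons, occ_cons_cons, ih]
    cases a <;> simp only [occ_01_append_false_cons, List.count_cons_self, List.count_cons_of_ne,
      ne_eq, Bool.false_eq_true, not_false_eq_true, reduceIte] <;> ring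

theorem occ_101_eq_zero_of_false_not_mem {w : List Bool} (h : false ∉ w) :
    occ [true, false, true] w = 0 :=
  occ_eq_zero_of_not_sublist fun hs => h (hs.subset (by simp))

/-- The largest product of three natural numbers with sum `n`, attained by `s, s, n - 2s`. -/
def maxProd3 (n : ℕ) : ℕ := (n - 2 * ((n + 1) / 3)) * ((n + 1) / 3) ^ 2

theorem mul_le_half_mul_half (x y : ℕ) : x * y ≤ (x + y) / 2 * ((x + y + 1) / 2) := by
  rcases Nat.even_or_odd (x + y) with ⟨u, hu⟩ | ⟨u, hu⟩
  · rw [show (x + y) / 2 = u by omega, show (x + y + 1) / 2 = u by omega]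
    nlinarith [sq_nonneg ((x : ℤ) - y)]
  · rw [show (x + y) / 2 = u by omega, show (x + y + 1) / 2 = u + 1 by omega]
    nlinarith [sq_nonneg ((x : ℤ) - y)]

/- In both inequalities the difference of the two sides is `(u - s)` times a cofactor whose sign
is constant on each side of `u = s`. -/
theorem three_parts_mul_le_even (n s u : ℤ) (hs : 0 ≤ s) (hu : 0 ≤ u) (hn : |n - 3 * s| ≤ 1) :
    u * u * (n - 2 * u) ≤ s * s * (n - 2 * s) := by
  obtain ⟨c, rfl⟩ : ∃ c, n = 3 * s + c := ⟨n - 3 * s, by ring⟩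
  obtain ⟨hc1, hc2⟩ := abs_le.1 (show |c| ≤ 1 by simpa using hn)
  rcases lt_trichotomy u s with h | rfl | h
  · have hQ : 0 ≤ (s - u) * (s + 2 * u - c) + 2 * c * s := by
      nlinarith [mul_nonneg hu (by linarith : (0:ℤ) ≤ s - 1 - u)]
    nlinarith [mul_nonneg (sub_nonneg.2 h.le) hQ]
  · rfl
  · have hR : 0 ≤ (u - s) * (2 * u + s) - c * (u + s) := by
      nlinarith [mul_nonneg (by linarith : (0:ℤ) ≤ u - s - 1) (by linarith : (0:ℤ) ≤ 2 * u + s),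
        mul_nonneg (by linarith : (0:ℤ) ≤ 1 - c) (by linarith : (0:ℤ) ≤ u + s)]
    nlinarith [mul_nonneg (sub_nonneg.2 h.le) hR]

theorem three_parts_mul_le_odd (n s u : ℤ) (hs : 0 ≤ s) (hu : 0 ≤ u) (hn : |n - 3 * s| ≤ 1) :
    u * (u + 1) * (n - 2 * u - 1) ≤ s * s * (n - 2 * s) := by
  obtain ⟨c, rfl⟩ : ∃ c, n = 3 * s + c := ⟨n - 3 * s, by ring⟩
  obtain ⟨hc1, hc2⟩ := abs_le.1 (show |c| ≤ 1 by simpa using hn)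
  rcases lt_or_ge u s with h | h
  · have hQ : 0 ≤ (s - u) * (s + 2 * u - c) + 2 * c * s - u := by
      nlinarith [mul_nonneg hu (by linarith : (0:ℤ) ≤ s - 1 - u)]
    nlinarith [mul_nonneg (sub_nonneg.2 h.le) hQ]
  · have hR : 0 ≤ 2 * (u ^ 2 + u * s + s ^ 2) + 2 * (u + s) - (3 * s + c - 1) * (u + s + 1) := by
      nlinarith [mul_nonneg (sub_nonneg.2 h) (by linarith : (0:ℤ) ≤ 2 * u + s),
        mul_nonneg (by linarith : (0:ℤ) ≤ 1 - c) (by linarith : (0:ℤ) ≤ u + s + 1)]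
    nlinarith [mul_nonneg (sub_nonneg.2 h) hR, mul_nonneg hs (by linarith : (0:ℤ) ≤ 1 - c)]

theorem half_mul_half_mul_le_maxProd3 (m z : ℕ) :
    m / 2 * ((m + 1) / 2) * z ≤ maxProd3 (m + z) := by
  set s := (m + z + 1) / 3 with hs
  have hn : |((m + z : ℕ) : ℤ) - 3 * s| ≤ 1 := abs_le.2 ⟨by omega, by omega⟩
  have h2s : 2 * s ≤ m + z := by omega
  rw [maxProd3, ← hs]
  rcases Nat.even_or_odd m with ⟨u, hu⟩ | ⟨u, hu⟩
  · rw [show m / 2 = u by omega, show (m + 1) / 2 = u by omega]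
    have := three_parts_mul_le_even _ s u (by positivity) (by positivity) hn
    zify [h2s]
    subst hu
    push_cast at this ⊢
    linarith
  · rw [show m / 2 = u by omega, show (m + 1) / 2 = u + 1 by omega]
    have := three_parts_mul_le_odd _ s u (by positivity) (by positivity) hn
    zify [h2s]
    subst hu
    push_cast at this ⊢
    linarith

theorem occ_101_le (w : List Bool) :
    occ [true, false, true] w ≤
      w.count false * (w.count true / 2 * ((w.count true + 1) / 2)) := by
  induction hz : w.count false generalizing w with
  | zero => simp [occ_101_eq_zero_of_false_not_mem (List.count_eq_zero.1 hz)]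
  | succ z ih =>
    obtain ⟨u, v, rfl⟩ :=
      List.append_of_mem (List.count_pos_iff.1 (by omega : 0 < w.count false))
    have hz' : (u ++ v).count false = z := by
      simp only [List.count_append, List.count_cons_self] at hz ⊢; omega
    have ht : (u ++ false :: v).count true = (u ++ v).count true := by simp [List.count_append]
    rw [occ_101_append_false_cons, ht, add_mul, one_mul]
    exact add_le_add (ih _ hz') (by simpa [List.count_append] using mul_le_half_mul_half _ _)

theorem occ_101_le_maxProd3 (w : List Bool) : occ [true, false, true] w ≤ maxProd3 w.length := by
  rw [← List.count_true_add_count_false]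
  exact (occ_101_le w).trans_eq (mul_comm _ _) |>.trans (half_mul_half_mul_le_maxProd3 _ _)

theorem List.exists_eq_append_count_eq {α : Type*} [BEq α] (b : α) :
    ∀ (w : List α) {a : ℕ}, a ≤ w.count b → ∃ u v, w = u ++ v ∧ u.count b = a
  | [], a, h => ⟨[], [], rfl, by simp_all⟩
  | _ :: _, 0, _ => ⟨[], _, rfl, rfl⟩
  | x :: w, a + 1, h => by
    rw [List.count_cons] at h
    obtain ⟨u, v, rfl, hu⟩ := List.exists_eq_append_count_eq b w
      (a := if x == b then a else a + 1) (by split_ifs at h ⊢ <;> omega)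
    exact ⟨x :: u, v, rfl, by rw [List.count_cons, hu]; split_ifs <;> rfl⟩

theorem exists_occ_101_eq_sum (t : ℕ) (as : List ℕ) (h : ∀ a ∈ as, a ≤ t) :
    ∃ w : List Bool, w.length = t + as.length ∧ w.count true = t ∧
      occ [true, false, true] w = (as.map fun a => a * (t - a)).sum := by
  induction as with
  | nil =>
    exact ⟨List.replicate t true, by simp, by simp, occ_101_eq_zero_of_false_not_mem (by simp)⟩
  | cons a as ih =>
    obtain ⟨w, hlen, hcount, hocc⟩ := ih fun b hb => h b (List.mem_cons_of_mem a hb)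
    obtain ⟨u, v, rfl, hu⟩ := List.exists_eq_append_count_eq true w (a := a)
      (hcount ▸ h a List.mem_cons_self)
    rw [List.count_append] at hcount
    refine ⟨u ++ false :: v, ?_, ?_, ?_⟩
    · simp only [List.length_append, List.length_cons] at hlen ⊢; omega
    · simp [List.count_append, hcount]
    · rw [occ_101_append_false_cons, hocc, hu, List.map_cons, List.sum_cons,
        show v.count true = t - a by omega, add_comm]

theorem exists_occ_101_eq_maxProd3 (n : ℕ) :
    ∃ w : List Bool, w.length = n ∧ occ [true, false, true] w = maxProd3 n := by
  obtain ⟨w, hlen, -, hocc⟩ := exists_occ_101_eq_sum (2 * ((n + 1) / 3))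
    (List.replicate (n - 2 * ((n + 1) / 3)) ((n + 1) / 3))
    (by simp only [List.mem_replicate, and_imp, forall_eq_apply_imp_iff]; omega)
  refine ⟨w, by simp only [List.length_replicate] at hlen; omega, ?_⟩
  rw [hocc, maxProd3, List.map_replicate, List.sum_replicate, smul_eq_mul,
    show 2 * ((n + 1) / 3) - (n + 1) / 3 = (n + 1) / 3 by omega, sq]

theorem exists_occ_101_eq_of_le_of_le_add (s z k : ℕ) (hz : 4 ≤ z) (hk : k ≤ z * s ^ 2)
    (hk' : z * s ^ 2 ≤ k + s ^ 2) :
    ∃ w : List Bool, w.length = 2 * s + z ∧ occ [true, false, true] w = k := by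
  obtain ⟨a, b, c, d, habcd⟩ := Nat.sum_four_squares (z * s ^ 2 - k)
  have hle : ∀ e, e ^ 2 ≤ z * s ^ 2 - k → e ≤ s := fun e he =>
    (Nat.pow_le_pow_iff_left two_ne_zero).1 (by omega)
  have ha := hle a (by omega); have hb := hle b (by omega)
  have hc := hle c (by omega); have hd := hle d (by omega)
  obtain ⟨w, hlen, -, hocc⟩ := exists_occ_101_eq_sum (2 * s)
    ([s - a, s - b, s - c, s - d] ++ List.replicate (z - 4) s)
    (by simp only [List.cons_append, List.nil_append, List.mem_cons, List.mem_replicate,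
      forall_eq_or_imp, and_imp, forall_eq_apply_imp_iff]; omega)
  have hsum : ∀ e ≤ s, (s - e) * (2 * s - (s - e)) + e ^ 2 = s ^ 2 := fun e he => by
    zify [he, show s - e ≤ 2 * s by omega]
    ring
  refine ⟨w, ?_, ?_⟩
  · simp only [List.cons_append, List.nil_append, List.length_cons, List.length_replicate] at hlen
    omega
  · rw [hocc]
    simp only [List.map_append, List.map_cons, List.map_nil, List.sum_append, List.sum_cons,
      List.sum_nil, List.map_replicate, List.sum_replicate, smul_eq_mul,
      show 2 * s - s = s by omega]
    have fa := hsum a ha; have fb := hsum b hb; have fc := hsum c hc; have fd := hsum d hd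
    zify [hk, hz] at habcd fa fb fc fd ⊢
    linear_combination fa + fb + fc + fd - habcd

/-- The occurrence counts of the suffixes `1`, `01`, `101` of `101`, computed in linear time
(`occ` itself enumerates all sublists) for the exhaustive checks below. -/
def suffixOccs101 : List Bool → ℕ × ℕ × ℕ
  | [] => (0, 0, 0)
  | true :: w => let (a, b, c) := suffixOccs101 w; (a + 1, b, c + b)
  | false :: w => let (a, b, c) := suffixOccs101 w; (a, b + a, c)

theorem suffixOccs101_eq (w : List Bool) :
    suffixOccs101 w = (occ [true] w, occ [false, true] w, occ [true, false, true] w) := by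
  induction w with
  | nil => rfl
  | cons a w ih => cases a <;> simp [suffixOccs101, ih, occ_cons_cons, occ_nil_left]

def allWords : ℕ → List (List Bool)
  | 0 => [[]]
  | n + 1 => (allWords n).flatMap fun w => [false :: w, true :: w]

theorem mem_allWords {w : List Bool} {n : ℕ} : w ∈ allWords n ↔ w.length = n := by
  induction n generalizing w with
  | zero => simp [allWords]
  | succ n ih => rcases w with _ | ⟨_ | _, w⟩ <;> simp [allWords, ih]

theorem exists_occ_101_eq_of_lt_twelve {n : ℕ} (hn12 : n < 12) (hn : n ≠ 6) {k : ℕ}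
    (hk : k ≤ maxProd3 n) : ∃ w : List Bool, w.length = n ∧ occ [true, false, true] w = k := by
  have hcheck : ∀ n ∈ List.range 12, n ≠ 6 → ∀ k ∈ List.range (maxProd3 n + 1),
      k ∈ (allWords n).map fun w => (suffixOccs101 w).2.2 := by
    decide +kernel
  obtain ⟨w, hw, rfl⟩ := List.mem_map.1
    (hcheck n (List.mem_range.2 hn12) hn k (List.mem_range.2 (Nat.lt_succ_of_le hk)))
  exact ⟨w, mem_allWords.1 hw, by simp [suffixOccs101_eq]⟩

theorem occ_101_ne_five_of_length_eq_six {w : List Bool} (hw : w.length = 6) :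
    occ [true, false, true] w ≠ 5 := by
  have hcheck : ∀ w ∈ allWords 6, (suffixOccs101 w).2.2 ≠ 5 := by decide +kernel
  simpa [suffixOccs101_eq] using hcheck w (mem_allWords.2 hw)

theorem exists_occ_101_eq {n : ℕ} (hn : n ≠ 6) {k : ℕ} (hk : k ≤ maxProd3 n) :
    ∃ w : List Bool, w.length = n ∧ occ [true, false, true] w = k := by
  induction n generalizing k with
  | zero => exact exists_occ_101_eq_of_lt_twelve (by norm_num) hn hk
  | succ m ih =>
    rcases lt_or_ge m 11 with hm | hm
    · exact exists_occ_101_eq_of_lt_twelve (by omega) hn hk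
    rcases le_or_gt k (maxProd3 m) with hkm | hkm
    · obtain ⟨w, hw, hocc⟩ := ih (by omega) hkm
      exact ⟨false :: w, by simp [hw], by simp [occ_cons_cons, hocc]⟩
    -- `k` lies in the top range of length `m + 1`, whose balanced split has `z + 1 ≥ 4` zeros
    set s := (m + 1 + 1) / 3
    obtain ⟨z, hz⟩ : ∃ z, m + 1 - 2 * s = z + 1 := ⟨m - 2 * s, by omega⟩
    have hmax : maxProd3 (m + 1) = (z + 1) * s ^ 2 := by rw [maxProd3, hz]
    have hlow : z * s ^ 2 ≤ maxProd3 m := by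
      have := half_mul_half_mul_le_maxProd3 (2 * s) z
      rwa [show 2 * s / 2 = s by omega, show (2 * s + 1) / 2 = s by omega,
        show 2 * s + z = m by omega, ← sq, mul_comm] at this
    obtain ⟨w, hw, hocc⟩ := exists_occ_101_eq_of_le_of_le_add s (z + 1) k (by omega)
      (hmax ▸ hk) (by rw [add_mul, one_mul]; omega)
    exact ⟨w, by omega, hocc⟩

theorem B_ne_zero_iff {n : ℕ} {p : List Bool} {k : ℕ} :
    B n p k ≠ 0 ↔ ∃ w : List Bool, w.length = n ∧ occ p w = k := by
  have : Finite {w : List Bool // w.length = n ∧ occ p w = k} :=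
    ((List.finite_length_eq Bool n).subset fun _ hw => hw.1).to_subtype
  simp [B, Nat.card_ne_zero, this]

theorem B_101_ne_zero_iff {n : ℕ} (hn : n ≠ 6) {k : ℕ} :
    B n [true, false, true] k ≠ 0 ↔ k ≤ maxProd3 n := by
  rw [B_ne_zero_iff]
  refine ⟨?_, exists_occ_101_eq hn⟩
  rintro ⟨w, rfl, rfl⟩
  exact occ_101_le_maxProd3 w

theorem maxOcc_101 (n : ℕ) : maxOcc n [true, false, true] = maxProd3 n :=
  IsGreatest.csSup_eq ⟨exists_occ_101_eq_maxProd3 n, by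
    rintro _ ⟨w, rfl, rfl⟩
    exact occ_101_le_maxProd3 w⟩

theorem word101_internalZero_only_at_six :
    HasInternalZeroAt [true, false, true] 6 ∧
    (∀ n : ℕ, n ≠ 6 → ¬ HasInternalZeroAt [true, false, true] n) ∧
    (∀ n : ℕ, n ≠ 6 → ∀ k, k ≤ maxOcc n [true, false, true] →
      ∃ w : List Bool, w.length = n ∧ occ [true, false, true] w = k) ∧
    B 6 [true, false, true] 5 = 0 ∧ B 6 [true, false, true] 6 ≠ 0 := by
  have hB5 : B 6 [true, false, true] 5 = 0 := by
    by_contra h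
    obtain ⟨w, hw, hocc⟩ := B_ne_zero_iff.1 h
    exact occ_101_ne_five_of_length_eq_six hw hocc
  have hB4 : B 6 [true, false, true] 4 ≠ 0 :=
    B_ne_zero_iff.2 ⟨[true, true, false, true, true, false], rfl, by decide⟩
  have hB6 : B 6 [true, false, true] 6 ≠ 0 :=
    B_ne_zero_iff.2 ⟨[true, true, false, true, true, true], rfl, by decide⟩
  refine ⟨⟨4, 5, 6, by norm_num, by norm_num, hB4, hB5, hB6⟩, ?_, ?_, hB5, hB6⟩
  · rintro n hn ⟨-, k₂, k₃, -, h₂₃, -, hk₂, hk₃⟩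
    exact (B_101_ne_zero_iff hn).2 (h₂₃.le.trans ((B_101_ne_zero_iff hn).1 hk₃)) hk₂
  · intro n hn k hk
    exact exists_occ_101_eq hn (maxOcc_101 n ▸ hk)
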